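/- arXiv:math/0702197 — 8 statements merged into one kernel-verified Lean document; each statement's English description precedes it below -/
import Mathlib

section
/- Let X be a finite nonempty set and let R ⊆ X × Y and R̃ ⊆ X × Z be covered relations over X. Then the K-complex of R is contained in the K-complex of R̃ if and only if there exists a morphism of relations f : (Y,R) → (Z,R̃). -/
/-- For a finite nonempty set `X` and covered relations `R ⊆ X × Y`,
`R̃ ⊆ X × Z`, the K-complex of `R` is contained in the K-complex of `R̃` if and only if there
exists a morphism of relations `f : (Y,R) → (Z,R̃)`. -/
theorem stmt_5 {X Y Z : Type} [Fintype X] [Nonempty X]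
    (R : X → Y → Prop) (R' : X → Z → Prop)
    (hR : ∀ y : Y, ∃ x : X, R x y) (hR' : ∀ z : Z, ∃ x : X, R' x z) :
    {s : Finset X | s.Nonempty ∧ ∃ y : Y, ∀ x ∈ s, R x y} ⊆
        {s : Finset X | s.Nonempty ∧ ∃ z : Z, ∀ x ∈ s, R' x z} ↔
      ∃ f : Y → Z, ∀ x y, R x y → R' x (f y) := by
  classical
  constructor
  · intro h
    have key : ∀ y : Y, ∃ z : Z, ∀ x : X, R x y → R' x z := by
      intro y
      set s : Finset X := Finset.univ.filter (fun x => R x y) with hs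
      obtain ⟨x0, hx0⟩ := hR y
      have hmem : s ∈ {s : Finset X | s.Nonempty ∧ ∃ y : Y, ∀ x ∈ s, R x y} := by
        refine ⟨⟨x0, by simp [hs, hx0]⟩, y, ?_⟩
        intro x hx
        simpa [hs] using hx
      obtain ⟨-, z, hz⟩ := h hmem
      exact ⟨z, fun x hx => hz x (by simp [hs, hx])⟩
    choose f hf using key
    exact ⟨f, fun x y h => hf y x h⟩
  · rintro ⟨f, hf⟩ s ⟨hne, y, hy⟩
    exact ⟨hne, f y, fun x hx => hf x y (hy x hx)⟩
end

section
/- Let X be a finite nonempty set and let R ⊆ X × Y and R̃ ⊆ X × Z be covered relations over X. Then (Y,R) and (Z,R̃) are equivalent if and only if the K-complex of R equals the K-complex of R̃. (Hence, for finite X, equivalence classes of covered relations over X correspond bijectively to subcomplexes of the full simplicial complex spanned by X via the assignment (Y,R) ↦ K-complex of R.) -/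
/-- For a finite nonempty set `X` and covered relations `R ⊆ X × Y`,
`R̃ ⊆ X × Z`, the relations `(Y,R)` and `(Z,R̃)` are equivalent (morphisms of relations exist
in both directions) if and only if their K-complexes coincide. -/
theorem stmt_6 {X Y Z : Type} [Fintype X] [Nonempty X]
    (R : X → Y → Prop) (R' : X → Z → Prop)
    (hR : ∀ y : Y, ∃ x : X, R x y) (hR' : ∀ z : Z, ∃ x : X, R' x z) :
    ((∃ f : Y → Z, ∀ x y, R x y → R' x (f y)) ∧ (∃ h : Z → Y, ∀ x z, R' x z → R x (h z))) ↔
      {s : Finset X | s.Nonempty ∧ ∃ y : Y, ∀ x ∈ s, R x y} =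
        {s : Finset X | s.Nonempty ∧ ∃ z : Z, ∀ x ∈ s, R' x z} := by
  classical
  constructor
  · rintro ⟨⟨f, hf⟩, ⟨h, hh⟩⟩
    ext s
    simp only [Set.mem_setOf_eq]
    constructor
    · rintro ⟨hs, y, hy⟩
      exact ⟨hs, f y, fun x hx => hf x y (hy x hx)⟩
    · rintro ⟨hs, z, hz⟩
      exact ⟨hs, h z, fun x hx => hh x z (hz x hx)⟩
  · intro hK
    constructor
    · have h1 : ∀ y : Y, ∃ z : Z, ∀ x, R x y → R' x z := by
        intro y
        obtain ⟨x0, hx0⟩ := hR y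
        set s : Finset X := Finset.univ.filter (fun x => R x y) with hs
        have hmem : s ∈ {s : Finset X | s.Nonempty ∧ ∃ y : Y, ∀ x ∈ s, R x y} :=
          ⟨⟨x0, by simp [hs, hx0]⟩, y, fun x hx => (Finset.mem_filter.mp hx).2⟩
        rw [hK] at hmem
        obtain ⟨-, z, hz⟩ := hmem
        exact ⟨z, fun x hx => hz x (by simp [hs, hx])⟩
      choose f hf using h1
      exact ⟨f, fun x y h => hf y x h⟩
    · have h1 : ∀ z : Z, ∃ y : Y, ∀ x, R' x z → R x y := by
        intro z
        obtain ⟨x0, hx0⟩ := hR' z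
        set s : Finset X := Finset.univ.filter (fun x => R' x z) with hs
        have hmem : s ∈ {s : Finset X | s.Nonempty ∧ ∃ z : Z, ∀ x ∈ s, R' x z} :=
          ⟨⟨x0, by simp [hs, hx0]⟩, z, fun x hx => (Finset.mem_filter.mp hx).2⟩
        rw [← hK] at hmem
        obtain ⟨-, y, hy⟩ := hmem
        exact ⟨y, fun x hx => hy x (by simp [hs, hx])⟩
      choose h hh using h1
      exact ⟨h, fun x z hz => hh z x hz⟩
end

section
/- Let X be an infinite set, let Y be the set of all nonempty subsets of X and Z the set of all nonempty finite subsets of X, with the relations R ⊆ X × Y and R̃ ⊆ X × Z given by membership (x R T iff x ∈ T, and likewise for R̃). Then the K-complex of R equals the K-complex of R̃, but there exists no morphism of relations f : (Y,R) → (Z,R̃). -/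
/-- For an infinite set `X`, let `Y` be the set of nonempty subsets of `X` and
`Z` the set of nonempty finite subsets of `X`, with the membership relations. Then the
K-complexes of the two relations coincide, but there is no morphism of relations
`f : (Y,R) → (Z,R̃)`. -/
theorem stmt_7 {X : Type} [Infinite X]
    (R : X → {S : Set X // S.Nonempty} → Prop) (hRdef : ∀ x S, R x S ↔ x ∈ S.1)
    (R' : X → {s : Finset X // s.Nonempty} → Prop) (hR'def : ∀ x s, R' x s ↔ x ∈ s.1) :
    {s : Finset X | s.Nonempty ∧ ∃ S : {S : Set X // S.Nonempty}, ∀ x ∈ s, R x S} =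
        {s : Finset X | s.Nonempty ∧ ∃ t : {t : Finset X // t.Nonempty}, ∀ x ∈ s, R' x t} ∧
      ¬ ∃ f : {S : Set X // S.Nonempty} → {s : Finset X // s.Nonempty},
          ∀ x S, R x S → R' x (f S) := by
  constructor
  · ext s
    simp only [Set.mem_setOf_eq]
    constructor
    · rintro ⟨hs, _⟩
      exact ⟨hs, ⟨⟨s, hs⟩, fun x hx => (hR'def x _).mpr hx⟩⟩
    · rintro ⟨hs, _⟩
      exact ⟨hs, ⟨⟨(s : Set X), by exact_mod_cast hs.to_set⟩,
        fun x hx => (hRdef x _).mpr (by exact_mod_cast hx)⟩⟩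
  · rintro ⟨f, hf⟩
    set S : {S : Set X // S.Nonempty} := ⟨Set.univ, Set.univ_nonempty⟩
    obtain ⟨x, hx⟩ := (f S).1.exists_notMem
    exact hx ((hR'def x (f S)).mp (hf x S ((hRdef x S).mpr (Set.mem_univ x))))
end

section
/- Let (X, ≤) be a finite poset and let T be its K-complex. If s is a maximal simplex of T (i.e., s ∈ T and s is not properly contained in any other element of T), then s contains exactly one element y that is maximal in the poset X, and s = {y} ∪ {x ∈ X | x < y}. -/
/-- Let `(X, ≤)` be a finite poset with K-complex `T`. Every maximal simplex `s`
of `T` contains exactly one maximal element `y` of `X`, and `s = {y} ∪ {x | x < y}`. -/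
theorem stmt_9 {X : Type} [Fintype X] [PartialOrder X]
    (T : Set (Finset X)) (hT : T = {s : Finset X | s.Nonempty ∧ ∃ y : X, ∀ x ∈ s, x ≤ y})
    (s : Finset X) (hs : s ∈ T) (hmax : ∀ s' ∈ T, s ⊆ s' → s' = s) :
    (∃! y : X, y ∈ s ∧ ∀ w : X, ¬ y < w) ∧
      ∀ y : X, y ∈ s → (∀ w : X, ¬ y < w) →
        (↑s : Set X) = insert y {x : X | x < y} := by
  classical
  subst hT
  obtain ⟨hne, y₀, hy₀⟩ := hs
  obtain ⟨m, hym, hm⟩ := Finite.exists_le_maximal (a := y₀) (p := fun _ => True) trivial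
  have hmmax : ∀ w : X, ¬ m < w := by
    intro w hw
    exact absurd (hm.2 trivial hw.le) (not_le_of_gt hw)
  -- the candidate maximal simplex
  set t : Finset X := insert m (Finset.univ.filter (fun x => x < m)) with ht
  have hsub : s ⊆ t := by
    intro x hx
    have : x ≤ m := le_trans (hy₀ x hx) hym
    rcases this.lt_or_eq with h | h
    · exact Finset.mem_insert.2 (Or.inr (Finset.mem_filter.2 ⟨Finset.mem_univ _, h⟩))
    · exact Finset.mem_insert.2 (Or.inl h)
  have htT : t ∈ {s : Finset X | s.Nonempty ∧ ∃ y : X, ∀ x ∈ s, x ≤ y} := by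
    refine ⟨⟨m, Finset.mem_insert_self _ _⟩, m, ?_⟩
    intro x hx
    rcases Finset.mem_insert.1 hx with h | h
    · exact h.le
    · exact (Finset.mem_filter.1 h).2.le
  have hst : t = s := hmax t htT hsub
  have hms : m ∈ s := hst ▸ Finset.mem_insert_self _ _
  have hkey : ∀ x ∈ s, x = m ∨ x < m := by
    intro x hx
    rw [← hst] at hx
    rcases Finset.mem_insert.1 hx with h | h
    · exact Or.inl h
    · exact Or.inr (Finset.mem_filter.1 h).2
  constructor
  · refine ⟨m, ⟨hms, hmmax⟩, ?_⟩
    intro y ⟨hys, hymax⟩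
    rcases hkey y hys with h | h
    · exact h
    · exact absurd h (hymax m)
  · intro y hys hymax
    have hym : y = m := by
      rcases hkey y hys with h | h
      · exact h
      · exact absurd h (hymax m)
    subst hym
    ext x
    simp only [Finset.coe_insert, Set.mem_insert_iff, Finset.mem_coe, Set.mem_setOf_eq]
    constructor
    · intro hx
      rcases hkey x hx with h | h
      · exact Or.inl h
      · exact Or.inr h
    · rintro (rfl | h)
      · exact hms
      · rw [← hst]
        exact Finset.mem_insert.2 (Or.inr (Finset.mem_filter.2 ⟨Finset.mem_univ _, h⟩))
end

section
/- Let X be a finite nonempty set and let T be a finite simplicial complex whose vertex set is X (i.e., {x} ∈ T for every x ∈ X). Then T is the K-complex of some partial order ≤ on X if and only if for every maximal simplex s of T there exists y ∈ s such that y ∉ s' for every maximal simplex s' of T with s' ≠ s. -/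
/-!
If `≤` is a partial order on a finite set, the maximal simplices of its K-complex are the down-sets
`{x | x ≤ m}` of the maximal elements `m`, and `m` lies in no other of them. Conversely, if every
maximal simplex `s` has a private vertex `y s`, declare `a ≤ b` when `a = b` or `b = y s` for a
maximal simplex `s` containing `a`. Privacy makes this a partial order, its down-sets `{x | x ≤ y s}`
are exactly the maximal simplices, and every other element is bounded above only by itself, which
gives back `T` because it contains the vertices and is closed under subsets.
-/

open Finset

variable {α : Type*}

def kComplex (r : α → α → Prop) : Set (Finset α) :=
  {s | s.Nonempty ∧ ∃ y, ∀ x ∈ s, r x y}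

def HasPrivateVertices (T : Set (Finset α)) : Prop :=
  ∀ s, Maximal (· ∈ T) s → ∃ y ∈ s, ∀ s', Maximal (· ∈ T) s' → y ∈ s' → s' = s

lemma maximal_mem_iff_forall_eq {T : Set (Finset α)} {s : Finset α} :
    Maximal (· ∈ T) s ↔ s ∈ T ∧ ∀ s' ∈ T, s ⊆ s' → s' = s := by
  simp only [maximal_iff, eq_comm (a := s)]

lemma hasPrivateVertices_iff {T : Set (Finset α)} :
    HasPrivateVertices T ↔ ∀ s ∈ T, (∀ s' ∈ T, s ⊆ s' → s' = s) →
      ∃ y ∈ s, ∀ s' ∈ T, (∀ s'' ∈ T, s' ⊆ s'' → s'' = s') → s' ≠ s → y ∉ s' := by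
  simp only [HasPrivateVertices, maximal_mem_iff_forall_eq, and_imp, ne_eq, not_imp_not]

section KComplex

variable {r : α → α → Prop} {s t : Finset α} {m : α}

lemma exists_rel_and_forall_rel_eq [IsPartialOrder α r] [Finite α] (y : α) :
    ∃ m, r y m ∧ ∀ z, r m z → z = m := by
  let _ : PartialOrder α :=
    { le := r
      le_refl := refl_of r
      le_trans := fun _ _ _ => trans_of r
      le_antisymm := fun _ _ => antisymm_of r }
  obtain ⟨m, hym, hm⟩ := Finite.exists_le_maximal (p := fun _ => True) (a := y) trivial
  exact ⟨m, hym, fun z hmz => hm.eq_of_ge trivial hmz⟩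

lemma forall_rel_of_mem_kComplex (hs : s ∈ kComplex r) (hm : m ∈ s)
    (hm_max : ∀ z, r m z → z = m) : ∀ x ∈ s, r x m := by
  obtain ⟨-, y, hy⟩ := hs
  exact hm_max y (hy m hm) ▸ hy

lemma Maximal.mem_of_forall_rel_kComplex [Std.Refl r] (hs : Maximal (· ∈ kComplex r) s)
    (hsm : ∀ x ∈ s, r x m) : m ∈ s := by
  classical
  have hins : insert m s ∈ kComplex r :=
    ⟨insert_nonempty m s, m, forall_mem_insert _ _ _ |>.2 ⟨refl_of r m, hsm⟩⟩
  rw [hs.eq_of_le hins (subset_insert m s)]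
  exact mem_insert_self m s

lemma Maximal.eq_of_forall_rel_kComplex (hs : Maximal (· ∈ kComplex r) s)
    (ht : Maximal (· ∈ kComplex r) t) (hsm : ∀ x ∈ s, r x m) (htm : ∀ x ∈ t, r x m) : s = t := by
  classical
  have hst : s ∪ t ∈ kComplex r :=
    ⟨hs.prop.1.mono subset_union_left, m, fun x hx => (mem_union.1 hx).elim (hsm x) (htm x)⟩
  exact (hs.eq_of_le hst subset_union_left).trans (ht.eq_of_le hst subset_union_right).symm

theorem hasPrivateVertices_kComplex [IsPartialOrder α r] [Finite α] :
    HasPrivateVertices (kComplex r) := by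
  intro s hs
  obtain ⟨-, y, hy⟩ := hs.prop
  obtain ⟨m, hym, hm_max⟩ := exists_rel_and_forall_rel_eq (r := r) y
  have hsm : ∀ x ∈ s, r x m := fun x hx => trans_of r (hy x hx) hym
  refine ⟨m, hs.mem_of_forall_rel_kComplex hsm, fun s' hs' hms' => ?_⟩
  exact hs'.eq_of_forall_rel_kComplex hs (forall_rel_of_mem_kComplex hs'.prop hms' hm_max) hsm

end KComplex

section ApexRel

variable {T : Set (Finset α)} {y : Finset α → α} {a b : α}

def apexRel (T : Set (Finset α)) (y : Finset α → α) (a b : α) : Prop :=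
  a = b ∨ ∃ s, Maximal (· ∈ T) s ∧ b = y s ∧ a ∈ s

lemma apexRel_apex_iff (hy_mem : ∀ s, Maximal (· ∈ T) s → y s ∈ s)
    (hy_private : ∀ s, Maximal (· ∈ T) s → ∀ s', Maximal (· ∈ T) s' → y s ∈ s' → s' = s)
    {s : Finset α} (hs : Maximal (· ∈ T) s) : apexRel T y a (y s) ↔ a ∈ s := by
  refine ⟨?_, fun ha => Or.inr ⟨s, hs, rfl, ha⟩⟩
  rintro (rfl | ⟨s', hs', hys, ha⟩)
  · exact hy_mem s hs
  · rwa [hy_private s' hs' s hs (hys ▸ hy_mem s hs)]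

lemma eq_of_apexRel_of_forall_ne_apex (hb : ∀ s, Maximal (· ∈ T) s → b ≠ y s)
    (hab : apexRel T y a b) : a = b :=
  hab.resolve_right fun ⟨s, hs, hbs, _⟩ => hb s hs hbs

lemma isPartialOrder_apexRel
    (hy_private : ∀ s, Maximal (· ∈ T) s → ∀ s', Maximal (· ∈ T) s' → y s ∈ s' → s' = s) :
    IsPartialOrder α (apexRel T y) where
  refl _ := Or.inl rfl
  trans a b c := by
    rintro (rfl | ⟨s, hs, rfl, ha⟩) hbc
    · exact hbc
    · rcases hbc with rfl | ⟨s', hs', rfl, hys⟩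
      · exact Or.inr ⟨s, hs, rfl, ha⟩
      · rw [hy_private s hs s' hs' hys]
        exact Or.inr ⟨s, hs, rfl, ha⟩
  antisymm a b := by
    rintro (rfl | ⟨s, hs, rfl, ha⟩) hba
    · rfl
    · rcases hba with h | ⟨s', hs', rfl, hys⟩
      · exact h.symm
      · rw [hy_private s hs s' hs' hys]

theorem kComplex_apexRel [Finite α] (h_ne : ∀ s ∈ T, s.Nonempty)
    (h_down : ∀ s ∈ T, ∀ t : Finset α, t ⊆ s → t.Nonempty → t ∈ T) (h_vert : ∀ x : α, {x} ∈ T)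
    (hy_mem : ∀ s, Maximal (· ∈ T) s → y s ∈ s)
    (hy_private : ∀ s, Maximal (· ∈ T) s → ∀ s', Maximal (· ∈ T) s' → y s ∈ s' → s' = s) :
    kComplex (apexRel T y) = T := by
  ext t
  refine ⟨fun ⟨ht, z, hz⟩ => ?_, fun ht => ?_⟩
  · by_cases hz_apex : ∃ s, Maximal (· ∈ T) s ∧ z = y s
    · obtain ⟨s, hs, rfl⟩ := hz_apex
      exact h_down s hs.prop t (fun x hx => (apexRel_apex_iff hy_mem hy_private hs).1 (hz x hx)) ht
    · push Not at hz_apex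
      exact h_down {z} (h_vert z) t
        (fun x hx => mem_singleton.2 (eq_of_apexRel_of_forall_ne_apex hz_apex (hz x hx))) ht
  · obtain ⟨s, hts, hs⟩ := Finite.exists_le_maximal (p := (· ∈ T)) ht
    exact ⟨h_ne t ht, y s, fun x hx => (apexRel_apex_iff hy_mem hy_private hs).2 (hts hx)⟩

end ApexRel

/-- Let `X` be a finite nonempty set and `T` a simplicial complex with vertex
set `X`. Then `T` is the K-complex of some partial order on `X` if and only if every maximal
simplex of `T` has an element belonging to no other maximal simplex. -/
theorem stmt_11 {X : Type} [Fintype X] [Nonempty X] (T : Set (Finset X))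
    (h_ne : ∀ s ∈ T, Finset.Nonempty s)
    (h_down : ∀ s ∈ T, ∀ t : Finset X, t ⊆ s → t.Nonempty → t ∈ T)
    (h_vert : ∀ x : X, {x} ∈ T) :
    (∃ r : X → X → Prop, IsPartialOrder X r ∧
        T = {s : Finset X | s.Nonempty ∧ ∃ y : X, ∀ x ∈ s, r x y}) ↔
      ∀ s : Finset X, s ∈ T → (∀ s' ∈ T, s ⊆ s' → s' = s) →
        ∃ y ∈ s, ∀ s' : Finset X, s' ∈ T → (∀ s'' ∈ T, s' ⊆ s'' → s'' = s') → s' ≠ s →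
          y ∉ s' := by
  rw [← hasPrivateVertices_iff]
  constructor
  · rintro ⟨r, hr, rfl⟩
    exact hasPrivateVertices_kComplex
  · intro hT
    choose! y hy_mem hy_private using hT
    exact ⟨apexRel T y, isPartialOrder_apexRel hy_private,
      (kComplex_apexRel h_ne h_down h_vert hy_mem hy_private).symm⟩
end

section
/- Let X be a finite set with at least 3 elements and let T be the boundary of the simplex spanned by X, i.e., the family of all nonempty proper subsets of X. Then T is not the K-complex of any partial order on X. -/
/-- Let `X` be a finite set with at least 3 elements and let `T` be the boundary
of the simplex spanned by `X` (all nonempty proper subsets of `X`). Then `T` is not the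
K-complex of any partial order on `X`. -/
theorem stmt_12 {X : Type} [Fintype X] (hcard : 3 ≤ Fintype.card X) :
    ¬ ∃ r : X → X → Prop, IsPartialOrder X r ∧
        {s : Finset X | s.Nonempty ∧ s ≠ Finset.univ} =
          {s : Finset X | s.Nonempty ∧ ∃ y : X, ∀ x ∈ s, r x y} := by
  classical
  rintro ⟨r, hpo, heq⟩
  have hX : Nonempty X := Fintype.card_pos_iff.mp (by omega)
  have hne : (Finset.univ : Finset X).Nonempty := Finset.univ_nonempty
  -- univ has no upper bound
  have hnoU : ¬ ∃ y : X, ∀ x : X, r x y := by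
    rintro ⟨y, hy⟩
    have hmem : (Finset.univ : Finset X) ∈
        {s : Finset X | s.Nonempty ∧ s ≠ Finset.univ} := by
      rw [heq]; exact ⟨hne, y, fun x _ => hy x⟩
    exact hmem.2 rfl
  -- every co-singleton has an upper bound
  have hub : ∀ a : X, ∃ y : X, ∀ x, x ≠ a → r x y := by
    intro a
    have hmem : (Finset.univ.erase a) ∈
        {s : Finset X | s.Nonempty ∧ s ≠ Finset.univ} := by
      constructor
      · apply Finset.card_pos.mp
        rw [Finset.card_erase_of_mem (Finset.mem_univ a), Finset.card_univ]
        omega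
      · intro h
        have := Finset.notMem_erase a (Finset.univ : Finset X)
        rw [h] at this
        exact this (Finset.mem_univ a)
    rw [heq] at hmem
    obtain ⟨-, y, hy⟩ := hmem
    exact ⟨y, fun x hx => hy x (Finset.mem_erase.mpr ⟨hx, Finset.mem_univ x⟩)⟩
  -- key lemma
  have key : ∀ a b ya yb : X, a ≠ b → (∀ x, x ≠ a → r x ya) →
      (∀ x, x ≠ b → r x yb) → ya = b := by
    intro a b ya yb hab hya hyb
    by_contra hyab
    apply hnoU
    refine ⟨yb, fun x => ?_⟩
    by_cases hx : x = b
    · subst hx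
      exact hpo.trans _ _ _ (hya x hab.symm) (hyb ya hyab)
    · exact hyb x hx
  obtain ⟨a, b, c, hab, hac, hbc⟩ := (Fintype.two_lt_card_iff (α := X)).mp (by omega)
  obtain ⟨ya, hya⟩ := hub a
  obtain ⟨yb, hyb⟩ := hub b
  obtain ⟨yc, hyc⟩ := hub c
  have h1 : yc = a := key c a yc ya hac.symm hyc hya
  have h2 : yc = b := key c b yc yb hbc.symm hyc hyb
  exact hab (h1 ▸ h2)
end

section
/- Let ≤ be a partial order on a finite set X. Then there exists a partial order ≤' on X in which every chain has at most two elements (i.e., ≤' has length at most 2) such that the K-complex of (X, ≤') equals the K-complex of (X, ≤). -/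
/-- For any partial order `≤` on a finite set `X`, there is a partial order on
`X` in which every chain has at most two elements and whose K-complex equals the K-complex of
`(X, ≤)`. -/
theorem stmt_13 {X : Type} [Fintype X] [PartialOrder X] :
    ∃ r : X → X → Prop, IsPartialOrder X r ∧
      (∀ c : Finset X, (∀ x ∈ c, ∀ y ∈ c, r x y ∨ r y x) → c.card ≤ 2) ∧
      {s : Finset X | s.Nonempty ∧ ∃ y : X, ∀ x ∈ s, r x y} =
        {s : Finset X | s.Nonempty ∧ ∃ y : X, ∀ x ∈ s, x ≤ y} := by
  refine ⟨fun x y => x = y ∨ (x ≤ y ∧ IsMax y), ?_, ?_, ?_⟩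
  · refine { refl := fun x => Or.inl rfl, trans := ?_, antisymm := ?_ }
    · rintro x y z (rfl | ⟨hxy, hy⟩) h
      · exact h
      · rcases h with rfl | ⟨hyz, hz⟩
        · exact Or.inr ⟨hxy, hy⟩
        · exact Or.inr ⟨hxy.trans hyz, hz⟩
    · rintro x y (rfl | ⟨hxy, hy⟩) h
      · rfl
      · rcases h with rfl | ⟨hyx, hx⟩
        · rfl
        · exact le_antisymm hxy hyx
  · intro c hc
    by_contra h
    push_neg at h
    obtain ⟨x, y, z, hx, hy, hz, hxy, hxz, hyz⟩ := Finset.two_lt_card_iff.mp h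
    have key : ∀ a ∈ c, ∀ b ∈ c, a ≠ b → (a ≤ b ∧ IsMax b) ∨ (b ≤ a ∧ IsMax a) := by
      intro a ha b hb hab
      rcases hc a ha b hb with (rfl | h') | (rfl | h')
      · exact absurd rfl hab
      · exact Or.inl h'
      · exact absurd rfl hab
      · exact Or.inr h'
    rcases key x hx y hy hxy with ⟨h1, hmy⟩ | ⟨h1, hmx⟩
    · rcases key y hy z hz hyz with ⟨h2, hmz⟩ | ⟨h2, _⟩
      · exact hyz (le_antisymm h2 (hmy h2))
      · rcases key x hx z hz hxz with ⟨h3, hmz⟩ | ⟨h3, hmx⟩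
        · exact hyz (le_antisymm (hmz h2) h2)
        · exact hxy (le_antisymm h1 (hmx h1))
    · rcases key x hx z hz hxz with ⟨h2, hmz⟩ | ⟨h2, _⟩
      · exact hxz (le_antisymm h2 (hmx h2))
      · rcases key y hy z hz hyz with ⟨h3, hmz⟩ | ⟨h3, hmy⟩
        · exact hxz (le_antisymm (hmz h2) h2)
        · exact hxy (le_antisymm (hmy h1) h1)
  · ext s
    simp only [Set.mem_setOf_eq]
    constructor
    · rintro ⟨hs, y, hy⟩
      exact ⟨hs, y, fun x hx => by rcases hy x hx with rfl | ⟨h, _⟩ <;> [exact le_rfl; exact h]⟩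
    · rintro ⟨hs, y, hy⟩
      obtain ⟨m, hm, hmax⟩ := Finite.exists_le_maximal (p := fun _ : X => True) (a := y) trivial
      have hmm : IsMax m := fun b hb => hmax.2 trivial hb
      exact ⟨hs, m, fun x hx => Or.inr ⟨(hy x hx).trans hm, hmm⟩⟩
end

section
/- Let (X, ≤) be a finite poset such that no connected component of X is a single point (equivalently, every x ∈ X is comparable with some y ≠ x). Let L be the L-complex of the relation ≤, i.e., the family of nonempty finite subsets t of X that have a lower bound in X, and let L' be the L-complex of the strict relation <, i.e., the nonempty finite subsets t of X such that there exists z ∈ X with z < x for all x ∈ t. Then L simplicially collapses to L'. -/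
/-!
A simplex of the L-complex of `≤` that is not in the L-complex of `<` is exactly one whose least
element `m` is minimal in `X`. By hypothesis every minimal `m` lies below some `y(m) ≠ m`, and
toggling `y(m)` in such a simplex matches these simplices in pairs `σ ⊂ σ ∪ {y(m)}`. Removing the
pairs in order of decreasing size is a sequence of elementary collapses: if `w` is a largest
remaining simplex, any other simplex containing `w \ {y}` still has least element `m` (nothing
lies strictly below `m`), so it contains `y` (otherwise adding `y` would beat `w`) and is `w`.
-/

/-- An elementary simplicial collapse: there are simplices `σ ⊊ σ'` in `T` such that `σ'` is
the unique simplex of `T` properly containing `σ`, and `M = T \ {σ, σ'}`. -/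
def ElemCollapse {X : Type} (T M : Set (Finset X)) : Prop :=
  ∃ σ σ' : Finset X, σ ∈ T ∧ σ' ∈ T ∧ σ ⊂ σ' ∧ (∀ τ ∈ T, σ ⊂ τ → τ = σ') ∧
    M = T \ {σ, σ'}

open Finset Relation
open scoped symmDiff

namespace Finset

variable {X : Type} [DecidableEq X] {t : Finset X} {a : X}

theorem symmDiff_singleton_of_mem (h : a ∈ t) : t ∆ {a} = t.erase a := by
  ext x
  by_cases hx : x = a <;> simp [mem_symmDiff, hx, h]

theorem symmDiff_singleton_of_notMem (h : a ∉ t) : t ∆ {a} = insert a t := by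
  ext x
  by_cases hx : x = a <;> simp [mem_symmDiff, hx, h]

theorem symmDiff_singleton_subset_or_subset (t : Finset X) (a : X) :
    t ∆ {a} ⊆ t ∨ t ⊆ t ∆ {a} := by
  by_cases h : a ∈ t
  · exact .inl (symmDiff_singleton_of_mem h ▸ erase_subset a t)
  · exact .inr (symmDiff_singleton_of_notMem h ▸ subset_insert a t)

end Finset

section Collapse

variable {X : Type} [DecidableEq X] {M : Set (Finset X)} {A : Finset (Finset X)}
  {v : Finset X → X}

theorem apply_symmDiff_singleton_eq (hv : ∀ σ ∈ A, ∀ τ ∈ A, σ ⊆ τ → v τ = v σ)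
    (htoggle : ∀ t ∈ A, t ∆ {v t} ∈ A) {t : Finset X} (ht : t ∈ A) :
    v (t ∆ {v t}) = v t := by
  rcases symmDiff_singleton_subset_or_subset t (v t) with h | h
  · exact (hv _ (htoggle t ht) t ht h).symm
  · exact hv t ht _ (htoggle t ht) h

theorem symmDiff_singleton_mem_sdiff_pair (hv : ∀ σ ∈ A, ∀ τ ∈ A, σ ⊆ τ → v τ = v σ)
    (htoggle : ∀ t ∈ A, t ∆ {v t} ∈ A) {w : Finset X} (hw : w ∈ A) :
    ∀ t ∈ A \ {w ∆ {v w}, w}, t ∆ {v t} ∈ A \ {w ∆ {v w}, w} := by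
  intro t ht
  obtain ⟨htA, htw⟩ := mem_sdiff.1 ht
  refine mem_sdiff.2 ⟨htoggle t htA, fun h => htw ?_⟩
  have hvt := apply_symmDiff_singleton_eq hv htoggle htA
  rw [← symmDiff_symmDiff_cancel_right {v t} t]
  rcases mem_insert.1 h with h | h
  · have hvw : v t = v w := by rw [← hvt, h, apply_symmDiff_singleton_eq hv htoggle hw]
    rw [h, hvw, symmDiff_symmDiff_cancel_right]
    exact mem_insert_of_mem (mem_singleton_self w)
  · rw [mem_singleton] at h
    have hvw : v t = v w := by rw [← hvt, h]
    rw [h, hvw]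
    exact mem_insert_self _ _

theorem elemCollapse_union_sdiff_pair (hM : ∀ σ ∈ A, ∀ τ ∈ M, ¬σ ⊆ τ)
    (hv : ∀ σ ∈ A, ∀ τ ∈ A, σ ⊆ τ → v τ = v σ) (htoggle : ∀ t ∈ A, t ∆ {v t} ∈ A)
    {w : Finset X} (hw : w ∈ A) (hmax : ∀ t ∈ A, t.card ≤ w.card) :
    ElemCollapse (M ∪ A) (M ∪ ↑(A \ {w ∆ {v w}, w})) := by
  have mem_of_card_eq : ∀ t ∈ A, t.card = w.card → v t ∈ t := by
    intro t ht hcard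
    by_contra hvt
    have := hmax _ (htoggle t ht)
    rw [symmDiff_singleton_of_notMem hvt, card_insert_of_notMem hvt] at this
    omega
  set y := v w
  have hyw : y ∈ w := mem_of_card_eq w hw rfl
  set σ := w ∆ {y} with hσ
  rw [symmDiff_singleton_of_mem hyw] at hσ
  have hσA : σ ∈ A := htoggle w hw
  have hvσ : v σ = y := (hv σ hσA w hw (hσ ▸ erase_subset y w)).symm
  refine ⟨σ, w, .inr hσA, .inr hw, hσ ▸ erase_ssubset hyw, ?_, ?_⟩
  · rintro τ (hτM | hτA) hστ
    · exact absurd hστ.subset (hM σ hσA τ hτM)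
    have hcard : τ.card = w.card := by
      refine le_antisymm (hmax τ hτA) ?_
      rw [← card_erase_add_one hyw, ← hσ]
      exact card_lt_card hστ
    have hyτ : y ∈ τ := (hv σ hσA τ hτA hστ.subset).trans hvσ ▸ mem_of_card_eq τ hτA hcard
    refine (eq_of_subset_of_card_le ?_ hcard.le).symm
    rw [← insert_erase hyw, ← hσ]
    exact insert_subset hyτ hστ.subset
  · have hdisj : Disjoint M {σ, w} := by
      refine Set.disjoint_right.2 ?_
      rintro _ (rfl | rfl) hM'
      · exact hM _ hσA _ hM' subset_rfl
      · exact hM _ hw _ hM' subset_rfl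
    rw [Set.union_sdiff_distrib, hdisj.sdiff_eq_left, coe_sdiff, coe_insert, coe_singleton]

theorem reflTransGen_elemCollapse_union (hM : ∀ σ ∈ A, ∀ τ ∈ M, ¬σ ⊆ τ)
    (hv : ∀ σ ∈ A, ∀ τ ∈ A, σ ⊆ τ → v τ = v σ) (htoggle : ∀ t ∈ A, t ∆ {v t} ∈ A) :
    ReflTransGen ElemCollapse (M ∪ A) M := by
  induction A using Finset.strongInduction with
  | H A ih =>
  obtain rfl | hne := A.eq_empty_or_nonempty
  · rw [coe_empty, Set.union_empty]
  obtain ⟨w, hw, hmax⟩ := exists_max_image A card hne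
  refine .head (elemCollapse_union_sdiff_pair hM hv htoggle hw hmax) (ih _ ?_ ?_ ?_ ?_)
  · exact sdiff_ssubset (insert_subset (htoggle w hw) (singleton_subset_iff.2 hw))
      (insert_nonempty _ _)
  · exact fun σ hσ => hM σ (mem_sdiff.1 hσ).1
  · exact fun σ hσ τ hτ => hv σ (mem_sdiff.1 hσ).1 τ (mem_sdiff.1 hτ).1
  · exact symmDiff_singleton_mem_sdiff_pair hv htoggle hw

end Collapse

section LComplex

variable {X : Type}

def lComplex (r : X → X → Prop) : Set (Finset X) :=
  {t | t.Nonempty ∧ ∃ z, ∀ x ∈ t, r z x}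

theorem lComplex_mono {r s : X → X → Prop} (h : ∀ a b, r a b → s a b) :
    lComplex r ⊆ lComplex s :=
  fun _ ⟨hne, z, hz⟩ => ⟨hne, z, fun x hx => h _ _ (hz x hx)⟩

theorem lComplex_of_isEmpty [IsEmpty X] (r : X → X → Prop) : lComplex r = ∅ :=
  Set.eq_empty_of_forall_notMem fun _ ⟨⟨x, _⟩, _⟩ => isEmptyElim x

variable [PartialOrder X]

theorem mem_lComplex_le_diff_lComplex_lt {t : Finset X} :
    t ∈ lComplex (· ≤ ·) \ lComplex (· < ·) ↔ ∃ m, IsMin m ∧ IsLeast (t : Set X) m := by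
  constructor
  · rintro ⟨⟨hne, z, hz⟩, hlt⟩
    have hzt : z ∈ t := by
      by_contra hzt
      exact hlt ⟨hne, z, fun x hx => (hz x hx).lt_of_ne (ne_of_mem_of_not_mem hx hzt).symm⟩
    refine ⟨z, fun w hw => ?_, hzt, fun x hx => hz x hx⟩
    by_contra hwz
    exact hlt ⟨hne, w, fun x hx => (lt_of_le_not_ge hw hwz).trans_le (hz x hx)⟩
  · rintro ⟨m, hmin, hmt, hm⟩
    exact ⟨⟨⟨m, hmt⟩, m, fun x hx => hm hx⟩, fun ⟨_, z, hz⟩ => hmin.not_lt (hz m hmt)⟩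

theorem not_subset_of_isMin_mem {σ τ : Finset X} {m : X} (hmin : IsMin m) (hm : m ∈ σ)
    (hτ : τ ∈ lComplex (· < ·)) : ¬σ ⊆ τ :=
  fun hστ => let ⟨_, _, hz⟩ := hτ; hmin.not_lt (hz m (hστ hm))

theorem IsLeast.finset_symmDiff_singleton [DecidableEq X] {t : Finset X} {m y : X}
    (hm : IsLeast (t : Set X) m) (hy : m < y) : IsLeast (↑(t ∆ {y}) : Set X) m := by
  refine ⟨mem_symmDiff.2 (.inl ⟨hm.1, by simpa using hy.ne⟩), fun x hx => ?_⟩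
  rcases mem_symmDiff.1 hx with ⟨hxt, -⟩ | ⟨hxy, -⟩
  · exact hm.2 hxt
  · exact mem_singleton.1 hxy ▸ hy.le

end LComplex

/-- Let `(X, ≤)` be a finite poset in which no connected component is a single
point (every `x` is comparable with some `y ≠ x`). Then the L-complex of `≤` collapses to the
L-complex of `<` (a finite sequence of elementary collapses). -/
theorem stmt_16 {X : Type} [Fintype X] [PartialOrder X]
    (h : ∀ x : X, ∃ y : X, y ≠ x ∧ (x ≤ y ∨ y ≤ x)) :
    Relation.ReflTransGen (ElemCollapse (X := X))
      {t : Finset X | t.Nonempty ∧ ∃ z : X, ∀ x ∈ t, z ≤ x}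
      {t : Finset X | t.Nonempty ∧ ∃ z : X, ∀ x ∈ t, z < x} := by
  classical
  change ReflTransGen ElemCollapse (lComplex (· ≤ ·)) (lComplex (· < ·))
  cases isEmpty_or_nonempty X
  · rw [lComplex_of_isEmpty, lComplex_of_isEmpty]
  have exists_gt_of_isMin : ∀ m : X, IsMin m → ∃ y, m < y := fun m hm => by
    obtain ⟨y, hne, hmy | hym⟩ := h m
    · exact ⟨y, hmy.lt_of_ne hne.symm⟩
    · exact absurd (hm.eq_of_le hym) hne
  choose! up hup using exists_gt_of_isMin
  obtain ⟨A, hA⟩ :=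
    (Set.toFinite (lComplex (X := X) (· ≤ ·) \ lComplex (· < ·))).exists_finset_coe
  have mem_A : ∀ t, t ∈ A ↔ ∃ m, IsMin m ∧ IsLeast (t : Set X) m := fun t => by
    rw [← mem_coe, hA, mem_lComplex_le_diff_lComplex_lt]
  choose! bot hbot using fun t ht => (mem_A t).1 ht
  rw [← Set.union_sdiff_cancel (lComplex_mono fun _ _ => le_of_lt), ← hA]
  refine reflTransGen_elemCollapse_union (v := up ∘ bot) ?_ ?_ ?_
  · exact fun σ hσ τ hτ => not_subset_of_isMin_mem (hbot σ hσ).1 (hbot σ hσ).2.1 hτ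
  · intro σ hσ τ hτ hστ
    exact congrArg up ((hbot σ hσ).1.eq_of_le ((hbot τ hτ).2.2 (hστ (hbot σ hσ).2.1)))
  · intro t ht
    obtain ⟨hmin, hleast⟩ := hbot t ht
    exact (mem_A _).2 ⟨bot t, hmin, hleast.finset_symmDiff_singleton (hup _ hmin)⟩
end
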